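/- A commutative semigroup S has a non-universal monoid congruence if and only if there exists a subset A of S with ∅ ⊊ A ⊊ S such that Sep(A) ≠ ∅. -/

import Mathlib

/-!
If `S/p` has an identity `[s]`, then the class `A = [s]` is proper and nonempty and `s`
separates it, since multiplication by `s` fixes every class. Conversely, if `x` separates a
proper nonempty `A`, identify `a` and `b` when `s * a ∈ A ↔ s * b ∈ A` for all `s`. This is a
congruence, `x * a` is identified with `a` because `x` commutes with every `s`, and `A` is a
union of classes because `a ∈ A ↔ x * a ∈ A`; so `[x]` is an identity and the congruence is
not universal.
-/

def separator {S : Type*} [Mul S] (A : Set S) : Set S :=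
  {x | (∀ a ∈ A, x * a ∈ A) ∧ (∀ a ∈ A, a * x ∈ A) ∧
       (∀ a ∉ A, x * a ∉ A) ∧ (∀ a ∉ A, a * x ∉ A)}

theorem mem_separator_iff {S : Type*} [CommMagma S] {A : Set S} {x : S} :
    x ∈ separator A ↔ ∀ a, x * a ∈ A ↔ a ∈ A := by
  simp only [separator, Set.mem_ofPred_eq, mul_comm _ x]
  refine ⟨fun h a => ⟨fun hxa => ?_, h.1 a⟩, fun h => ?_⟩
  · by_contra ha
    exact h.2.2.1 a ha hxa
  · exact ⟨fun a => (h a).2, fun a => (h a).2, fun a => mt (h a).1, fun a => mt (h a).1⟩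

theorem mem_separator_preimage_of_map_identity {S M : Type*} [Mul S] [Mul M] (f : S →ₙ* M)
    (T : Set M) {s : S} (hs : ∀ y, f s * y = y ∧ y * f s = y) : s ∈ separator (f ⁻¹' T) := by
  simp only [separator, Set.mem_preimage, map_mul, hs, Set.mem_ofPred_eq]
  exact ⟨fun _ => id, fun _ => id, fun _ => id, fun _ => id⟩

section TranslationCon

variable {S : Type*} [CommSemigroup S]

def translationCon (A : Set S) : Con S where
  r a b := ∀ s, s * a ∈ A ↔ s * b ∈ A
  iseqv := ⟨fun _ _ => Iff.rfl, fun h s => (h s).symm, fun h k s => (h s).trans (k s)⟩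
  mul' {a b c d} h k s := by
    calc s * (a * c) ∈ A ↔ s * c * a ∈ A := by rw [mul_right_comm, mul_assoc]
      _ ↔ s * c * b ∈ A := h _
      _ ↔ s * b * c ∈ A := by rw [mul_right_comm]
      _ ↔ s * (b * d) ∈ A := by rw [← mul_assoc]; exact k _

variable {A : Set S} {x : S}

theorem translationCon_mul_self_of_mem_separator (hx : x ∈ separator A) (a : S) :
    translationCon A (x * a) a := fun s => by
  rw [mul_left_comm]
  exact mem_separator_iff.1 hx _

theorem mem_iff_of_translationCon (hx : x ∈ separator A) {a b : S} (h : translationCon A a b) :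
    a ∈ A ↔ b ∈ A := by
  rw [← mem_separator_iff.1 hx a, ← mem_separator_iff.1 hx b]
  exact h x

theorem coe_mul_eq_of_mem_separator (hx : x ∈ separator A) (y : (translationCon A).Quotient) :
    (x : (translationCon A).Quotient) * y = y ∧ y * x = y := by
  induction y using Con.induction_on with
  | H a =>
    have hxa : ((x * a : S) : (translationCon A).Quotient) = a :=
      Con.eq _ |>.2 (translationCon_mul_self_of_mem_separator hx a)
    rw [Con.coe_mul] at hxa
    exact ⟨hxa, by rw [mul_comm, hxa]⟩

end TranslationCon

theorem exists_monoid_congruence_iff {S : Type*} [CommSemigroup S] :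
    (∃ p : Con S, (∃ e : p.Quotient, ∀ x : p.Quotient, e * x = x ∧ x * e = x) ∧
        ¬ ∀ a b : S, p a b) ↔
    ∃ A : Set S, A.Nonempty ∧ A ≠ Set.univ ∧ (separator A).Nonempty := by
  constructor
  · rintro ⟨p, ⟨e, he⟩, hp⟩
    obtain ⟨s, rfl⟩ := Quotient.exists_rep e
    refine ⟨p.mkMulHom ⁻¹' {p.mkMulHom s}, ⟨s, rfl⟩, fun hA => hp fun a b => p.eq.1 ?_,
      ⟨s, mem_separator_preimage_of_map_identity _ _ he⟩⟩
    have h_eq_s (c : S) : (c : p.Quotient) = p.mkMulHom s := (hA ▸ Set.mem_univ c :)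
    exact (h_eq_s a).trans (h_eq_s b).symm
  · rintro ⟨A, ⟨a, ha⟩, hA, ⟨x, hx⟩⟩
    obtain ⟨b, hb⟩ := (Set.ne_univ_iff_exists_notMem A).1 hA
    exact ⟨translationCon A, ⟨x, coe_mul_eq_of_mem_separator hx⟩,
      fun h => hb ((mem_iff_of_translationCon hx (h a b)).1 ha)⟩
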